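/- arXiv:1902.08689 — 2 statements merged into one kernel-verified Lean document; each statement's English description precedes it below -/
import Mathlib

section
/- If G is a connected K_{1,r}-free graph with minimum degree at least r, where r ≥ 3, then G has the strong parity property. -/
open SimpleGraph

/-- The degree of `v` in `H`, defined as the cardinality of its neighbor set. -/
noncomputable def edeg {V : Type*} (H : SimpleGraph V) (v : V) : ℕ := (H.neighborSet v).ncard

/-- A factor of `G`: a spanning subgraph with all degrees at least 1. -/
def IsFactor {V : Type*} (G H : SimpleGraph V) : Prop :=
  H ≤ G ∧ ∀ v, 1 ≤ edeg H v

/-- An `X`-parity-factor of `G`: a factor whose odd-degree vertices are exactly `X`. -/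
def IsParityFactor {V : Type*} (G H : SimpleGraph V) (X : Set V) : Prop :=
  IsFactor G H ∧ ∀ v, (Odd (edeg H v) ↔ v ∈ X)

/-- `G` has the strong parity property if every even-sized vertex subset
admits an `X`-parity-factor. -/
def StrongParity {V : Type*} (G : SimpleGraph V) : Prop :=
  ∀ X : Set V, Even X.ncard → ∃ H, IsParityFactor G H X

/-!
In a connected graph every vertex set `X` of even size is the odd-degree set of a subgraph:
pair up the vertices of `X` and take the symmetric difference of walks joining the pairs.
In a `K_{1,r}`-free graph a vertex of degree at least `r` has two adjacent neighbours, so every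
vertex lies on a triangle. Taking the symmetric difference with a triangle through an isolated
vertex preserves all degree parities, gives that vertex two edges and isolates no other vertex;
hence a subgraph with odd-degree set `X` whose set of isolated vertices is minimal is a factor.
-/

open scoped symmDiff

theorem Set.ncard_symmDiff_add_two_mul_ncard_inter {α : Type*} (s t : Set α)
    (hs : s.Finite := by toFinite_tac) (ht : t.Finite := by toFinite_tac) :
    (s ∆ t).ncard + 2 * (s ∩ t).ncard = s.ncard + t.ncard := by
  have hsub : s ∩ t ⊆ s ∪ t := Set.inter_subset_left.trans Set.subset_union_left
  have := Set.ncard_le_ncard hsub (hs.union ht)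
  rw [show s ∆ t = (s ∪ t) \ (s ∩ t) from symmDiff_eq_sup_sdiff_inf _ _,
    Set.ncard_sdiff hsub (hs.inter_of_left t), ← Set.ncard_union_add_ncard_inter s t hs ht]
  omega

namespace SimpleGraph

variable {V : Type*}

theorem symmDiff_adj {H K : SimpleGraph V} {v w : V} :
    (H ∆ K).Adj v w ↔ ¬(H.Adj v w ↔ K.Adj v w) := by
  simp only [symmDiff_def, sup_adj, sdiff_adj]
  tauto

theorem neighborSet_symmDiff (H K : SimpleGraph V) (v : V) :
    (H ∆ K).neighborSet v = H.neighborSet v ∆ K.neighborSet v := by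
  ext w
  simp only [mem_neighborSet, symmDiff_adj, Set.mem_symmDiff]
  tauto

theorem symmDiff_le {G H K : SimpleGraph V} (hH : H ≤ G) (hK : K ≤ G) : H ∆ K ≤ G :=
  symmDiff_le_sup.trans (sup_le hH hK)

def oddVerts (H : SimpleGraph V) : Set V := {v | Odd (edeg H v)}

def isolatedVerts (H : SimpleGraph V) : Set V := {v | ∀ w, ¬H.Adj v w}

theorem one_le_edeg_iff [Finite V] {H : SimpleGraph V} {v : V} :
    1 ≤ edeg H v ↔ ∃ w, H.Adj v w :=
  Set.ncard_pos (Set.toFinite _)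

theorem oddVerts_symmDiff [Finite V] (H K : SimpleGraph V) :
    oddVerts (H ∆ K) = oddVerts H ∆ oddVerts K := by
  ext v
  have h := Set.ncard_symmDiff_add_two_mul_ncard_inter (H.neighborSet v) (K.neighborSet v)
  rw [← neighborSet_symmDiff] at h
  simp only [oddVerts, edeg, Set.mem_symmDiff, Set.mem_ofPred_eq, Nat.odd_iff]
  omega

theorem oddVerts_edge {a b : V} (hab : a ≠ b) : oddVerts (edge a b) = {a, b} := by
  classical
  have hnbr : ∀ v, (edge a b).neighborSet v =
      if v = a then {b} else if v = b then {a} else ∅ := by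
    intro v
    ext w
    split_ifs with hva hvb <;> subst_vars <;> simp [edge_adj] <;> grind
  ext v
  simp only [oddVerts, edeg, hnbr, Set.mem_ofPred_eq, Set.mem_insert_iff, Set.mem_singleton_iff]
  split_ifs <;> simp_all

theorem Walk.exists_le_oddVerts_eq_pair [Finite V] {G : SimpleGraph V} {a b : V}
    (p : G.Walk a b) (hab : a ≠ b) : ∃ K ≤ G, oddVerts K = {a, b} := by
  induction p with
  | nil => exact absurd rfl hab
  | @cons a c b hac q ih =>
    by_cases hcb : c = b
    · subst hcb
      exact ⟨edge a c, (edge_le_iff _).2 (.inr hac), oddVerts_edge hab⟩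
    obtain ⟨K, hKG, hK⟩ := ih hcb
    refine ⟨edge a c ∆ K, symmDiff_le ((edge_le_iff _).2 (.inr hac)) hKG, ?_⟩
    have hac' := hac.ne
    rw [oddVerts_symmDiff, oddVerts_edge hac', hK]
    ext x
    simp only [Set.mem_symmDiff, Set.mem_insert_iff, Set.mem_singleton_iff]
    grind

theorem Connected.exists_le_oddVerts_eq [Finite V] {G : SimpleGraph V} (hG : G.Connected)
    {X : Set V} (hX : Even X.ncard) : ∃ H ≤ G, oddVerts H = X := by
  obtain ⟨k, hk⟩ := hX
  induction k generalizing X with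
  | zero =>
    refine ⟨⊥, bot_le, ?_⟩
    rw [(Set.ncard_eq_zero (Set.toFinite X)).1 hk]
    ext v
    simp [oddVerts, edeg]
  | succ k ih =>
    obtain ⟨a, ha, b, hb, hab⟩ := (Set.one_lt_ncard (Set.toFinite X)).1 (by omega)
    have hsub : {a, b} ⊆ X := Set.insert_subset ha (Set.singleton_subset_iff.2 hb)
    have hcard : (X \ {a, b}).ncard = k + k := by
      rw [Set.ncard_sdiff hsub, Set.ncard_pair hab]
      omega
    obtain ⟨H, hHG, hH⟩ := ih hcard
    obtain ⟨K, hKG, hK⟩ := (hG.preconnected a b).some.exists_le_oddVerts_eq_pair hab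
    refine ⟨H ∆ K, symmDiff_le hHG hKG, ?_⟩
    rw [oddVerts_symmDiff, hH, hK, sdiff_symmDiff_eq_sup, sup_eq_left.2 hsub]

theorem exists_le_oddVerts_eq_isolatedVerts_ssubset [Finite V] {G H : SimpleGraph V}
    (hHG : H ≤ G) {u v w : V} (hvu : G.Adj v u) (hvw : G.Adj v w) (huw : G.Adj u w)
    (hv : v ∈ isolatedVerts H) :
    ∃ H' ≤ G, oddVerts H' = oddVerts H ∧ isolatedVerts H' ⊂ isolatedVerts H := by
  have hvu' := hvu.ne
  have hvw' := hvw.ne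
  have huw' := huw.ne
  set T := edge v u ∆ edge u w ∆ edge w v
  have hTG : T ≤ G := symmDiff_le (symmDiff_le ((edge_le_iff _).2 (.inr hvu))
    ((edge_le_iff _).2 (.inr huw))) ((edge_le_iff _).2 (.inr hvw.symm))
  have hT : oddVerts T = ∅ := by
    simp only [T, oddVerts_symmDiff, oddVerts_edge hvu', oddVerts_edge huw',
      oddVerts_edge hvw'.symm]
    ext x
    simp only [Set.mem_symmDiff, Set.mem_insert_iff, Set.mem_singleton_iff]
    grind
  have hTv : T.Adj v u ∧ T.Adj v w := by
    simp only [T, symmDiff_adj, edge_adj]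
    grind
  have hTx : ∀ x ∉ ({v, u, w} : Set V), ∀ y, ¬T.Adj x y := by
    simp only [T, symmDiff_adj, edge_adj, Set.mem_insert_iff, Set.mem_singleton_iff]
    grind
  have hvT : ∀ x, T.Adj v x → (H ∆ T).Adj v x ∧ (H ∆ T).Adj x v := fun x hx =>
    ⟨symmDiff_adj.2 (by grind [isolatedVerts]),
      symmDiff_adj.2 (by grind [isolatedVerts, adj_comm])⟩
  have hodd : oddVerts (H ∆ T) = oddVerts H := by
    rw [oddVerts_symmDiff, hT, ← Set.bot_eq_empty, symmDiff_bot]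
  refine ⟨H ∆ T, symmDiff_le hHG hTG, hodd, ?_, fun h => h hv u (hvT u hTv.1).1⟩
  intro x hx
  have hx' : x ∉ ({v, u, w} : Set V) := by
    rintro (rfl | rfl | rfl)
    exacts [hx u (hvT u hTv.1).1, hx v (hvT x hTv.1).2, hx v (hvT x hTv.2).2]
  exact fun y hxy => hx y (symmDiff_adj.2 (by simp [hxy, hTx x hx' y]))

theorem exists_le_oddVerts_eq_isolatedVerts_eq_empty [Finite V] {G H : SimpleGraph V}
    (htri : ∀ v, ∃ u w, G.Adj v u ∧ G.Adj v w ∧ G.Adj u w) (hHG : H ≤ G) :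
    ∃ H' ≤ G, oddVerts H' = oddVerts H ∧ isolatedVerts H' = ∅ := by
  obtain ⟨H', ⟨hH'G, hH'⟩, hmin⟩ := (InvImage.wf isolatedVerts wellFounded_lt).has_min
    {K | K ≤ G ∧ oddVerts K = oddVerts H} ⟨H, hHG, rfl⟩
  refine ⟨H', hH'G, hH', Set.eq_empty_of_forall_notMem fun v hv => ?_⟩
  obtain ⟨u, w, hvu, hvw, huw⟩ := htri v
  obtain ⟨K, hKG, hK, hlt⟩ := exists_le_oddVerts_eq_isolatedVerts_ssubset hH'G hvu hvw huw hv
  exact hmin K ⟨hKG, hK.trans hH'⟩ hlt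

theorem nonempty_completeBipartiteGraph_embedding {α β : Type*} [Subsingleton α]
    {G : SimpleGraph V} {v : V} (f : β ↪ V) (hadj : ∀ i, G.Adj v (f i))
    (hind : ∀ i j, ¬G.Adj (f i) (f j)) : Nonempty (completeBipartiteGraph α β ↪g G) := by
  refine ⟨⟨⟨Sum.elim (fun _ => v) f,
    (Function.injective_of_subsingleton _).sumElim f.injective fun _ i => (hadj i).ne⟩, ?_⟩⟩
  rintro (a | i) (b | j) <;> simp [hadj, (hadj _).symm, hind]

theorem exists_triangle_of_isEmpty_embedding [Finite V] {G : SimpleGraph V} {r : ℕ}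
    (hfree : IsEmpty (completeBipartiteGraph (Fin 1) (Fin r) ↪g G)) {v : V}
    (hv : r ≤ edeg G v) : ∃ u w, G.Adj v u ∧ G.Adj v w ∧ G.Adj u w := by
  classical
  have := Fintype.ofFinite V
  have hcard : Fintype.card (Fin r) ≤ Fintype.card (G.neighborSet v) := by
    rwa [Fintype.card_fin, ← Nat.card_eq_fintype_card, Nat.card_coe_set_eq]
  obtain ⟨f⟩ := Function.Embedding.nonempty_of_card_le hcard
  by_contra! hno
  exact (nonempty_completeBipartiteGraph_embedding (f.trans (Function.Embedding.subtype _))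
    (fun i => (f i).2) (fun i j => hno _ _ (f i).2 (f j).2)).elim hfree.false

end SimpleGraph

theorem star_free_min_degree_strong_parity_general {V : Type*} [Fintype V]
    (G : SimpleGraph V) (hG : G.Connected) (r : ℕ)
    (hfree : IsEmpty (completeBipartiteGraph (Fin 1) (Fin r) ↪g G))
    (hδ : ∀ v, r ≤ edeg G v) :
    StrongParity G := by
  intro X hX
  obtain ⟨H, hHG, rfl⟩ := hG.exists_le_oddVerts_eq hX
  obtain ⟨H', hH'G, hodd, hiso⟩ := exists_le_oddVerts_eq_isolatedVerts_eq_empty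
    (fun v => exists_triangle_of_isEmpty_embedding hfree (hδ v)) hHG
  refine ⟨H', ⟨hH'G, fun v => one_le_edeg_iff.2 ?_⟩, fun v => Set.ext_iff.1 hodd v⟩
  by_contra! hv
  exact hiso.subset hv

theorem star_free_min_degree_strong_parity {V : Type*} [Fintype V]
    (G : SimpleGraph V) (hG : G.Connected) (r : ℕ) (hr : 3 ≤ r)
    (hfree : IsEmpty (completeBipartiteGraph (Fin 1) (Fin r) ↪g G))
    (hδ : ∀ v, r ≤ edeg G v) :
    StrongParity G :=
  star_free_min_degree_strong_parity_general G hG r hfree hδ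
end

section
/- A tree T admits an odd caterpillar factor if and only if the spanning subgraph F with edge set E' = { e ∈ E(T) : T − e has two odd components } is an odd caterpillar factor of T. -/
open SimpleGraph

/-- A caterpillar: a connected acyclic graph with at least one edge in which
all vertices of degree at least 2 lie on a common path (the spine). -/
def IsCaterpillar {W : Type*} (H : SimpleGraph W) : Prop :=
  H.Connected ∧ H.IsAcyclic ∧ H.edgeSet.Nonempty ∧
    ∃ (u v : W) (p : H.Walk u v), p.IsPath ∧ ∀ w : W, 2 ≤ edeg H w → w ∈ p.support

/-- An odd caterpillar: a caterpillar in which every vertex of degree at least 2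
has odd degree. -/
def IsOddCaterpillar {W : Type*} (H : SimpleGraph W) : Prop :=
  IsCaterpillar H ∧ ∀ w : W, 2 ≤ edeg H w → Odd (edeg H w)

/-- An odd caterpillar factor of `T`: a spanning subgraph each of whose connected
components is an odd caterpillar. -/
def IsOddCaterpillarFactor {V : Type*} (T H : SimpleGraph V) : Prop :=
  H ≤ T ∧ ∀ c : H.ConnectedComponent, IsOddCaterpillar (SimpleGraph.induce c.supp H)

/-- The oddness of `v` in `T`: the number of odd-order components of `T - v`. -/
noncomputable def oddness {V : Type*} (T : SimpleGraph V) (v : V) : ℕ :=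
  {c : (SimpleGraph.induce {w : V | w ≠ v} T).ConnectedComponent | Odd c.supp.ncard}.ncard

/-! In an odd caterpillar factor `H` every vertex has odd degree: degree one, or an odd degree
on the spine. For an edge `uv` of the tree, let `A` be the vertex set of the component of `T - uv`
containing `u`. Summing `H`-degrees over `A` counts every `H`-edge inside `A` twice and, since `uv`
is the only edge of `T` leaving `A`, counts `uv` once if it lies in `H`. Hence `|A|` is odd iff
`uv ∈ H`, and the same holds for the other component, so the marked edges are exactly the edges of
`H`. -/

section OddDegreeCuts

open Finset

variable {V : Type*}

lemma edeg_eq_degree (H : SimpleGraph V) (v : V) [Fintype (H.neighborSet v)] :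
    edeg H v = H.degree v := by
  rw [edeg, ← Nat.card_coe_set_eq, Nat.card_eq_fintype_card, card_neighborSet_eq_degree]

lemma SimpleGraph.ConnectedComponent.edeg_induce_supp {H : SimpleGraph V}
    (c : H.ConnectedComponent) {v : V} (hv : v ∈ c.supp) :
    edeg (H.induce c.supp) ⟨v, hv⟩ = edeg H v := by
  have hnbr : Subtype.val '' (H.induce c.supp).neighborSet ⟨v, hv⟩ = H.neighborSet v := by
    ext x
    refine ⟨?_, fun hx => ⟨⟨x, ?_⟩, hx, rfl⟩⟩
    · rintro ⟨x, hx, rfl⟩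
      exact hx
    · exact (ConnectedComponent.connectedComponentMk_eq_of_adj hx).symm.trans hv
  rw [edeg, edeg, ← hnbr, Set.ncard_image_of_injective _ Subtype.val_injective]

lemma IsOddCaterpillar.odd_edeg {W : Type*} [Finite W] {H : SimpleGraph W}
    (h : IsOddCaterpillar H) (w : W) : Odd (edeg H w) := by
  obtain ⟨⟨hconn, -, ⟨e, he⟩, -⟩, hodd⟩ := h
  have : Nontrivial W := by
    induction e using Sym2.ind with
    | _ a b => exact ⟨a, b, H.ne_of_adj he⟩
  obtain ⟨x, hx⟩ := hconn.preconnected.exists_adj_of_nontrivial w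
  have hpos : 1 ≤ edeg H w := (Set.ncard_pos).2 ⟨x, hx⟩
  rcases hpos.eq_or_lt with h1 | h2
  · rw [← h1]
    exact odd_one
  · exact hodd w h2

lemma IsOddCaterpillarFactor.odd_edeg [Finite V] {T H : SimpleGraph V}
    (h : IsOddCaterpillarFactor T H) (v : V) : Odd (edeg H v) := by
  rw [← (H.connectedComponentMk v).edeg_induce_supp rfl]
  exact (h.2 _).odd_edeg _

namespace SimpleGraph

variable {G : SimpleGraph V}

lemma Walk.reachable_deleteEdges_or {x u : V} (v : V) (p : G.Walk x u) :
    (G.deleteEdges {s(u, v)}).Reachable x u ∨ (G.deleteEdges {s(u, v)}).Reachable x v := by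
  induction p with
  | nil => exact .inl .rfl
  | @cons a b c hab _ ih =>
    by_cases he : s(a, b) = s(c, v)
    · rcases Sym2.eq_iff.1 he with ⟨rfl, -⟩ | ⟨rfl, -⟩
      · exact .inl .rfl
      · exact .inr .rfl
    · have hab' : (G.deleteEdges {s(c, v)}).Adj a b := deleteEdges_adj.2 ⟨hab, he⟩
      exact ih.imp hab'.reachable.trans hab'.reachable.trans

lemma Connected.eq_connectedComponentMk_or_of_deleteEdges (hG : G.Connected) {u v : V}
    (c : (G.deleteEdges {s(u, v)}).ConnectedComponent) :
    c = (G.deleteEdges {s(u, v)}).connectedComponentMk u ∨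
      c = (G.deleteEdges {s(u, v)}).connectedComponentMk v := by
  obtain ⟨x, rfl⟩ := c.exists_rep
  exact ((hG.preconnected x u).some.reachable_deleteEdges_or v).imp
    ConnectedComponent.sound ConnectedComponent.sound

lemma eq_and_eq_of_adj_of_mem_supp_deleteEdges {u v w x : V}
    (hw : w ∈ ((G.deleteEdges {s(u, v)}).connectedComponentMk u).supp)
    (hx : x ∉ ((G.deleteEdges {s(u, v)}).connectedComponentMk u).supp) (hwx : G.Adj w x) :
    w = u ∧ x = v := by
  by_cases he : s(w, x) = s(u, v)
  · rcases Sym2.eq_iff.1 he with h | ⟨rfl, rfl⟩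
    · exact h
    · exact absurd rfl hx
  · have hwx' : (G.deleteEdges {s(u, v)}).Adj w x := deleteEdges_adj.2 ⟨hwx, he⟩
    exact absurd ((ConnectedComponent.connectedComponentMk_eq_of_adj hwx').symm.trans hw) hx

section Parity

variable [Fintype V] [DecidableEq V] (H : SimpleGraph V) [DecidableRel H.Adj]

lemma even_sum_card_neighborFinset_inter (A : Finset V) :
    Even (∑ w ∈ A, #(H.neighborFinset w ∩ A)) := by
  have hdeg (w : (A : Set V)) :
      (H.induce (A : Set V)).degree w = #(H.neighborFinset w ∩ A) := by
    rw [← card_neighborFinset_eq_degree, ← card_map (.subtype _)]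
    congr 1
    ext x
    simp
  have hsum := (H.induce (A : Set V)).sum_degrees_eq_twice_card_edges
  simp only [hdeg] at hsum
  rw [← sum_coe_sort A]
  exact ⟨_, hsum.trans (two_mul _)⟩

lemma odd_card_iff_odd_sum_card_neighborFinset_sdiff (hodd : ∀ w, Odd (H.degree w))
    (A : Finset V) : Odd #A ↔ Odd (∑ w ∈ A, #(H.neighborFinset w \ A)) := by
  have hsplit : ∑ w ∈ A, H.degree w =
      ∑ w ∈ A, #(H.neighborFinset w ∩ A) + ∑ w ∈ A, #(H.neighborFinset w \ A) := by
    rw [← sum_add_distrib]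
    exact sum_congr rfl fun w _ => by
      rw [card_inter_add_card_sdiff, card_neighborFinset_eq_degree]
  have hdegsum : Odd (∑ w ∈ A, H.degree w) ↔ Odd #A := by
    rw [odd_sum_iff_odd_card_odd, filter_true_of_mem fun w _ => hodd w]
  rw [← hdegsum, hsplit, Nat.odd_add', iff_true_right (even_sum_card_neighborFinset_inter H A)]

end Parity

lemma IsBridge.odd_card_supp_deleteEdges_iff_adj [Fintype V] {H : SimpleGraph V}
    [DecidableRel H.Adj] (hle : H ≤ G) (hodd : ∀ w, Odd (H.degree w)) {u v : V}
    (hb : G.IsBridge s(u, v)) :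
    Odd ((G.deleteEdges {s(u, v)}).connectedComponentMk u).supp.ncard ↔ H.Adj u v := by
  classical
  set A := ((G.deleteEdges {s(u, v)}).connectedComponentMk u).supp.toFinset
  have huA : u ∈ A := Set.mem_toFinset.2 rfl
  have hvA : v ∉ A := by
    rw [Set.mem_toFinset, ConnectedComponent.mem_supp_iff, ConnectedComponent.eq]
    exact fun hvu => isBridge_iff.1 hb hvu.symm
  have hexit (w : V) (hw : w ∈ A) (x : V) (hx : x ∈ H.neighborFinset w \ A) :
      w = u ∧ x = v := by
    rw [mem_sdiff, mem_neighborFinset] at hx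
    exact eq_and_eq_of_adj_of_mem_supp_deleteEdges (Set.mem_toFinset.1 hw)
      (fun hx' => hx.2 (Set.mem_toFinset.2 hx')) (hle hx.1)
  have hcross : H.neighborFinset u \ A = ({v} : Finset V).filter (H.Adj u) := by
    ext x
    simp only [mem_filter, mem_singleton]
    refine ⟨fun hx => ?_, ?_⟩
    · obtain ⟨-, rfl⟩ := hexit u huA x hx
      exact ⟨rfl, (mem_neighborFinset _ _ _).1 (mem_sdiff.1 hx).1⟩
    · rintro ⟨rfl, hux⟩
      exact mem_sdiff.2 ⟨(mem_neighborFinset _ _ _).2 hux, hvA⟩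
  have hsum : ∑ w ∈ A, #(H.neighborFinset w \ A) = #(H.neighborFinset u \ A) :=
    sum_eq_single_of_mem u huA fun w hw hwu =>
      card_eq_zero.2 (eq_empty_of_forall_notMem fun x hx => hwu (hexit w hw x hx).1)
  rw [Set.ncard_eq_toFinset_card', odd_card_iff_odd_sum_card_neighborFinset_sdiff H hodd, hsum,
    hcross, filter_singleton]
  split_ifs with h <;> simp [h]

lemma IsTree.forall_odd_card_supp_deleteEdges_iff_adj [Fintype V] {H : SimpleGraph V}
    [DecidableRel H.Adj] (hG : G.IsTree) (hle : H ≤ G) (hodd : ∀ w, Odd (H.degree w))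
    {u v : V} (huv : G.Adj u v) :
    (∀ c : (G.deleteEdges {s(u, v)}).ConnectedComponent, Odd c.supp.ncard) ↔ H.Adj u v := by
  have hbridge := isAcyclic_iff_forall_adj_isBridge.1 hG.isAcyclic
  refine ⟨fun h => ((hbridge huv).odd_card_supp_deleteEdges_iff_adj hle hodd).1 (h _),
    fun h c => ?_⟩
  rcases hG.connected.eq_connectedComponentMk_or_of_deleteEdges c with rfl | rfl
  · exact ((hbridge huv).odd_card_supp_deleteEdges_iff_adj hle hodd).2 h
  · rw [Sym2.eq_swap]
    exact ((hbridge huv.symm).odd_card_supp_deleteEdges_iff_adj hle hodd).2 h.symm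

end SimpleGraph

end OddDegreeCuts

theorem tree_odd_caterpillar_factor_iff_marked_edges {V : Type*} [Fintype V]
    (T : SimpleGraph V) (hT : T.IsTree) :
    (∃ H : SimpleGraph V, IsOddCaterpillarFactor T H) ↔
      IsOddCaterpillarFactor T (SimpleGraph.fromEdgeSet
        {e : Sym2 V | e ∈ T.edgeSet ∧
          ∀ c : (T.deleteEdges {e}).ConnectedComponent, Odd c.supp.ncard}) := by
  classical
  refine ⟨fun ⟨H, hH⟩ => ?_, fun h => ⟨_, h⟩⟩
  have hodd (w : V) : Odd (H.degree w) := edeg_eq_degree H w ▸ hH.odd_edeg w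
  suffices hmarked : {e : Sym2 V | e ∈ T.edgeSet ∧
      ∀ c : (T.deleteEdges {e}).ConnectedComponent, Odd c.supp.ncard} = H.edgeSet by
    rwa [hmarked, fromEdgeSet_edgeSet]
  ext ⟨u, v⟩
  refine ⟨fun ⟨huv, hcomp⟩ => ?_, fun huv => ⟨hH.1 huv, ?_⟩⟩
  · exact (hT.forall_odd_card_supp_deleteEdges_iff_adj hH.1 hodd huv).1 hcomp
  · exact (hT.forall_odd_card_supp_deleteEdges_iff_adj hH.1 hodd (hH.1 huv)).2 huv
end
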